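/- arXiv:2204.08949 — 4 statements merged into one kernel-verified Lean document; each statement's English description precedes it below -/
import Mathlib

section
/- Let a < b be real numbers and let f : [a,b] → ℝ be twice continuously differentiable with the following properties: (a) f(a) = f(b) = 0; (b) |f'(a)| = |f'(b)| ≥ 1; (c) f' has a unique zero c in the open interval (a,b); (d) f'' has at most one zero in [a,c] and at most one zero in [c,b]; (e) f'' has no non-negative local minima and no non-positive local maxima on (a,b) (i.e. if x ∈ (a,b) is a local minimum of f'' then f''(x) < 0, and if x is a local maximum of f'' then f''(x) > 0). Then |f(x)| > min{x − a, b − x}/20 for all x ∈ (a,b). -/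
open Set

/-!
Negating `f` and reflecting `x ↦ a + b - x` preserve the hypotheses, so it suffices to show
`f x ≥ (x - a) / 10` on `(a, c]` when `f' a ≥ 1`, and then `f' b ≤ -1`. The zero conditions on
`f''` give `z ≤ c < w` with `f' ≥ 1` on `[a, z]`, `f'' ≤ 0` on `[z, w]` and `f' ≤ -1` on `[w, b]`.
As `f''` has no nonpositive local maximum, it decreases and then increases on `[z, w]` around its
minimum `m`, so `f'` is concave on `[z, m]` and convex on `[m, w]`. Concavity keeps `f'` above the
chord from `(z, 1)` to `(x, 0)`, whence `f x ≥ (x - a) / 2` for `x ≤ m`. Convexity keeps `f'` below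
the line through `(c, 0)` and `(w, -1)` on `[c, w]`, so `f c ≥ (w - c) / 2`, and above it on
`[m, c]`; for `m < x ≤ c` these bounds and the monotonicity of `f'` on `[m, c]` give the claim.
-/

section Calculus

variable {φ ψ : ℝ → ℝ} {u v : ℝ}

theorem hasDerivWithinAt_Icc_of_subset {a b : ℝ}
    (hφ : ∀ x ∈ Icc a b, HasDerivWithinAt φ (ψ x) (Icc a b) x) (hu : a ≤ u) (hv : v ≤ b) :
    ∀ x ∈ Icc u v, HasDerivWithinAt φ (ψ x) (Icc u v) x := fun x hx =>
  (hφ x (Icc_subset_Icc hu hv hx)).mono (Icc_subset_Icc hu hv)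

theorem monotoneOn_Icc_of_hasDerivWithinAt_nonneg
    (hφ : ∀ x ∈ Icc u v, HasDerivWithinAt φ (ψ x) (Icc u v) x) (hψ : ∀ x ∈ Ioo u v, 0 ≤ ψ x) :
    MonotoneOn φ (Icc u v) :=
  monotoneOn_of_hasDerivWithinAt_nonneg (convex_Icc u v)
    (fun x hx => (hφ x hx).continuousWithinAt)
    (fun x hx => (hφ x (interior_subset hx)).mono interior_subset) (by rwa [interior_Icc])

theorem antitoneOn_Icc_of_hasDerivWithinAt_nonpos
    (hφ : ∀ x ∈ Icc u v, HasDerivWithinAt φ (ψ x) (Icc u v) x) (hψ : ∀ x ∈ Ioo u v, ψ x ≤ 0) :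
    AntitoneOn φ (Icc u v) :=
  antitoneOn_of_hasDerivWithinAt_nonpos (convex_Icc u v)
    (fun x hx => (hφ x hx).continuousWithinAt)
    (fun x hx => (hφ x (interior_subset hx)).mono interior_subset) (by rwa [interior_Icc])

theorem strictMonoOn_Icc_of_hasDerivWithinAt_pos
    (hφ : ∀ x ∈ Icc u v, HasDerivWithinAt φ (ψ x) (Icc u v) x) (hψ : ∀ x ∈ Ioo u v, 0 < ψ x) :
    StrictMonoOn φ (Icc u v) :=
  strictMonoOn_of_hasDerivWithinAt_pos (convex_Icc u v)
    (fun x hx => (hφ x hx).continuousWithinAt)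
    (fun x hx => (hφ x (interior_subset hx)).mono interior_subset) (by rwa [interior_Icc])

theorem convexOn_Icc_of_hasDerivWithinAt_of_monotoneOn
    (hφ : ∀ x ∈ Icc u v, HasDerivWithinAt φ (ψ x) (Icc u v) x) (hψ : MonotoneOn ψ (Icc u v)) :
    ConvexOn ℝ (Icc u v) φ := by
  have hderiv : ∀ x ∈ Ioo u v, HasDerivAt φ (ψ x) x := fun x hx =>
    (hφ x (Ioo_subset_Icc_self hx)).hasDerivAt (Icc_mem_nhds hx.1 hx.2)
  refine MonotoneOn.convexOn_of_deriv (convex_Icc u v) (fun x hx => (hφ x hx).continuousWithinAt)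
    ?_ ?_ <;> rw [interior_Icc]
  · exact fun x hx => (hderiv x hx).differentiableAt.differentiableWithinAt
  · exact (hψ.mono Ioo_subset_Icc_self).congr fun x hx => (hderiv x hx).deriv.symm

theorem concaveOn_Icc_of_hasDerivWithinAt_of_antitoneOn
    (hφ : ∀ x ∈ Icc u v, HasDerivWithinAt φ (ψ x) (Icc u v) x) (hψ : AntitoneOn ψ (Icc u v)) :
    ConcaveOn ℝ (Icc u v) φ :=
  neg_convexOn_iff.mp <| convexOn_Icc_of_hasDerivWithinAt_of_monotoneOn
    (fun x hx => (hφ x hx).neg) hψ.neg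

theorem sub_le_sub_of_hasDerivWithinAt_le {f g f' g' : ℝ → ℝ} (huv : u ≤ v)
    (hf : ∀ x ∈ Icc u v, HasDerivWithinAt f (f' x) (Icc u v) x)
    (hg : ∀ x ∈ Icc u v, HasDerivWithinAt g (g' x) (Icc u v) x)
    (hle : ∀ x ∈ Ioo u v, f' x ≤ g' x) : f v - f u ≤ g v - g u := by
  have := monotoneOn_Icc_of_hasDerivWithinAt_nonneg (fun x hx => (hg x hx).sub (hf x hx))
    (fun x hx => sub_nonneg.mpr (hle x hx)) ⟨le_rfl, huv⟩ ⟨huv, le_rfl⟩ huv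
  simp only [Pi.sub_apply] at this
  linarith

theorem mul_sub_le_sub_of_le_hasDerivWithinAt {f f' : ℝ → ℝ} {K : ℝ} (huv : u ≤ v)
    (hf : ∀ x ∈ Icc u v, HasDerivWithinAt f (f' x) (Icc u v) x) (hK : ∀ x ∈ Ioo u v, K ≤ f' x) :
    K * (v - u) ≤ f v - f u := by
  have := sub_le_sub_of_hasDerivWithinAt_le huv
    (fun x _ => ((hasDerivAt_id x).const_mul K).hasDerivWithinAt) hf (by simpa using hK)
  simp only [id] at this
  linarith

theorem sub_le_mul_sub_of_hasDerivWithinAt_le {f f' : ℝ → ℝ} {K : ℝ} (huv : u ≤ v)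
    (hf : ∀ x ∈ Icc u v, HasDerivWithinAt f (f' x) (Icc u v) x) (hK : ∀ x ∈ Ioo u v, f' x ≤ K) :
    f v - f u ≤ K * (v - u) := by
  have := sub_le_sub_of_hasDerivWithinAt_le huv hf
    (fun x _ => ((hasDerivAt_id x).const_mul K).hasDerivWithinAt) (by simpa using hK)
  simp only [id] at this
  linarith

theorem hasDerivAt_neg_half_mul_sub_sq (k p x : ℝ) :
    HasDerivAt (fun t => -k / 2 * (p - t) ^ 2) (k * (p - x)) x := by
  have h : HasDerivAt (fun t => p - t) (-1) x := by simpa using (hasDerivAt_id x).const_sub p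
  exact ((h.fun_pow 2).const_mul (-k / 2)).congr_deriv (by push_cast; ring)

theorem mul_sq_sub_sq_le_sub_of_le_hasDerivWithinAt {f f' : ℝ → ℝ} {k p : ℝ} (huv : u ≤ v)
    (hf : ∀ x ∈ Icc u v, HasDerivWithinAt f (f' x) (Icc u v) x)
    (hk : ∀ x ∈ Ioo u v, k * (p - x) ≤ f' x) :
    k * ((p - u) ^ 2 - (p - v) ^ 2) / 2 ≤ f v - f u := by
  have := sub_le_sub_of_hasDerivWithinAt_le huv
    (fun x _ => (hasDerivAt_neg_half_mul_sub_sq k p x).hasDerivWithinAt) hf hk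
  linarith

theorem sub_le_mul_sq_sub_sq_of_hasDerivWithinAt_le {f f' : ℝ → ℝ} {k p : ℝ} (huv : u ≤ v)
    (hf : ∀ x ∈ Icc u v, HasDerivWithinAt f (f' x) (Icc u v) x)
    (hk : ∀ x ∈ Ioo u v, f' x ≤ k * (p - x)) :
    f v - f u ≤ k * ((p - u) ^ 2 - (p - v) ^ 2) / 2 := by
  have := sub_le_sub_of_hasDerivWithinAt_le huv hf
    (fun x _ => (hasDerivAt_neg_half_mul_sub_sq k p x).hasDerivWithinAt) hk
  linarith

end Calculus

section Shape

variable {g : ℝ → ℝ} {u v : ℝ}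

theorem nonneg_or_nonpos_of_ne_zero (hg : ContinuousOn g (Icc u v))
    (h0 : ∀ t ∈ Ioo u v, g t ≠ 0) : (∀ t ∈ Icc u v, 0 ≤ g t) ∨ ∀ t ∈ Icc u v, g t ≤ 0 := by
  by_contra! ⟨⟨s, hs, hgs⟩, ⟨t, ht, hgt⟩⟩
  rcases lt_or_gt_of_ne (show s ≠ t by rintro rfl; linarith) with hst | hts
  · obtain ⟨r, hr, hr0⟩ :=
      intermediate_value_Ioo hst.le (hg.mono (Icc_subset_Icc hs.1 ht.2)) ⟨hgs, hgt⟩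
    exact h0 r ⟨hs.1.trans_lt hr.1, hr.2.trans_le ht.2⟩ hr0
  · obtain ⟨r, hr, hr0⟩ :=
      intermediate_value_Ioo' hts.le (hg.mono (Icc_subset_Icc ht.1 hs.2)) ⟨hgs, hgt⟩
    exact h0 r ⟨ht.1.trans_lt hr.1, hr.2.trans_le hs.2⟩ hr0

theorem exists_sign_split_of_subsingleton_zeros (huv : u ≤ v) (hg : ContinuousOn g (Icc u v))
    (hzeros : {x | x ∈ Icc u v ∧ g x = 0}.Subsingleton) :
    ∃ z ∈ Icc u v, ((∀ t ∈ Icc u z, 0 ≤ g t) ∨ ∀ t ∈ Icc u z, g t ≤ 0) ∧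
      ((∀ t ∈ Icc z v, 0 ≤ g t) ∨ ∀ t ∈ Icc z v, g t ≤ 0) := by
  by_cases hex : ∃ z ∈ Icc u v, g z = 0
  · obtain ⟨z, hz, hz0⟩ := hex
    have hne : ∀ t ∈ Icc u v, t ≠ z → g t ≠ 0 := fun t ht htz h0 =>
      htz (hzeros ⟨ht, h0⟩ ⟨hz, hz0⟩)
    exact ⟨z, hz,
      nonneg_or_nonpos_of_ne_zero (hg.mono (Icc_subset_Icc le_rfl hz.2)) fun t ht =>
        hne t ⟨ht.1.le, ht.2.le.trans hz.2⟩ ht.2.ne,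
      nonneg_or_nonpos_of_ne_zero (hg.mono (Icc_subset_Icc hz.1 le_rfl)) fun t ht =>
        hne t ⟨hz.1.trans ht.1.le, ht.2.le⟩ ht.1.ne'⟩
  · push Not at hex
    exact ⟨u, left_mem_Icc.2 huv,
      nonneg_or_nonpos_of_ne_zero (hg.mono (Icc_subset_Icc le_rfl huv)) fun t ht =>
        absurd (ht.1.trans ht.2) (lt_irrefl u),
      nonneg_or_nonpos_of_ne_zero hg fun t ht => hex t (Ioo_subset_Icc_self ht)⟩

theorem exists_isLocalMax_mem_Ioo {s t r : ℝ} (hg : ContinuousOn g (Icc s t)) (hr : r ∈ Icc s t)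
    (hs : g s < g r) (ht : g t < g r) : ∃ p ∈ Ioo s t, IsLocalMax g p :=
  isCompact_Icc.exists_isLocalMax_mem_open Ioo_subset_Icc_self hg hr
    (by rw [Icc_sdiff_Ioo_same (hr.1.trans hr.2)]; rintro _ (rfl | rfl) <;> assumption)
    isOpen_Ioo

theorem antitoneOn_monotoneOn_of_isMinOn {m : ℝ} (hg : ContinuousOn g (Icc u v))
    (hm : m ∈ Icc u v) (hmin : IsMinOn g (Icc u v) m) (hmax : ∀ p ∈ Ioo u v, ¬IsLocalMax g p) :
    AntitoneOn g (Icc u m) ∧ MonotoneOn g (Icc m v) := by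
  constructor
  · intro s hs t ht hst
    by_contra! hlt
    obtain ⟨p, hp, hpmax⟩ := exists_isLocalMax_mem_Ioo (hg.mono (Icc_subset_Icc hs.1 hm.2))
      ⟨hst, ht.2⟩ hlt ((hmin ⟨hs.1, hs.2.trans hm.2⟩).trans_lt hlt)
    exact hmax p ⟨hs.1.trans_lt hp.1, hp.2.trans_le hm.2⟩ hpmax
  · intro s hs t ht hst
    by_contra! hlt
    obtain ⟨p, hp, hpmax⟩ := exists_isLocalMax_mem_Ioo (hg.mono (Icc_subset_Icc hm.1 ht.2))
      ⟨hs.1, hst⟩ ((hmin ⟨hm.1.trans ht.1, ht.2⟩).trans_lt hlt) hlt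
    exact hmax p ⟨hm.1.trans_lt hp.1, hp.2.trans_le ht.2⟩ hpmax

end Shape

section Chords

variable {φ : ℝ → ℝ} {t : ℝ}

theorem ConcaveOn.inv_mul_sub_le {z m x : ℝ} (hφ : ConcaveOn ℝ (Icc z m) φ) (hxm : x ≤ m)
    (hz : 1 ≤ φ z) (hx : 0 ≤ φ x) (hzt : z < t) (htx : t < x) : (x - z)⁻¹ * (x - t) ≤ φ t := by
  have h := (neg_convexOn_iff.2 hφ).secant_mono_aux1 ⟨le_rfl, (hzt.trans htx).le.trans hxm⟩
    ⟨(hzt.trans htx).le, hxm⟩ hzt htx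
  simp only [Pi.neg_apply] at h
  rw [inv_mul_le_iff₀ (by linarith)]
  linarith [mul_le_mul_of_nonneg_left hz (sub_nonneg.2 htx.le),
    mul_nonneg (sub_nonneg.2 hzt.le) hx]

variable {m c w : ℝ}

theorem ConvexOn.inv_mul_sub_le (hφ : ConvexOn ℝ (Icc m w) φ) (hc : φ c = 0) (hw : φ w ≤ -1)
    (hmt : m ≤ t) (htc : t < c) (hcw : c < w) : (w - c)⁻¹ * (c - t) ≤ φ t := by
  have h := hφ.secant_mono_aux1 ⟨hmt, (htc.trans hcw).le⟩
    ⟨(hmt.trans_lt (htc.trans hcw)).le, le_rfl⟩ htc hcw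
  rw [hc] at h
  rw [inv_mul_le_iff₀ (by linarith)]
  linarith [mul_le_mul_of_nonneg_left hw (sub_nonneg.2 htc.le)]

theorem ConvexOn.le_inv_mul_sub (hφ : ConvexOn ℝ (Icc m w) φ) (hmc : m ≤ c) (hc : φ c = 0)
    (hw : φ w ≤ -1) (hct : c < t) (htw : t < w) : φ t ≤ (w - c)⁻¹ * (c - t) := by
  have h := hφ.secant_mono_aux1 ⟨hmc, (hct.trans htw).le⟩
    ⟨hmc.trans (hct.trans htw).le, le_rfl⟩ hct htw
  rw [hc] at h
  rw [le_inv_mul_iff₀ (by linarith)]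
  linarith [mul_le_mul_of_nonneg_left hw (sub_nonneg.2 hct.le)]

end Chords

section Estimates

variable {f f' : ℝ → ℝ} {a z m x c w : ℝ}

theorem half_sub_le_of_concaveOn (haz : a ≤ z) (hax : a ≤ x) (hxm : x ≤ m)
    (hf : ∀ t ∈ Icc a x, HasDerivWithinAt f (f' t) (Icc a x) t) (hfa : f a = 0)
    (h1 : ∀ t ∈ Icc a z, 1 ≤ f' t) (hx : 0 ≤ f' x) (hconc : ConcaveOn ℝ (Icc z m) f') :
    (x - a) / 2 ≤ f x := by
  rcases le_or_gt x z with hxz | hzx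
  · have := mul_sub_le_sub_of_le_hasDerivWithinAt hax hf fun t ht =>
      h1 t ⟨ht.1.le, ht.2.le.trans hxz⟩
    linarith
  · have hfz := mul_sub_le_sub_of_le_hasDerivWithinAt haz
      (hasDerivWithinAt_Icc_of_subset hf le_rfl hzx.le) fun t ht => h1 t (Ioo_subset_Icc_self ht)
    have hfx := mul_sq_sub_sq_le_sub_of_le_hasDerivWithinAt hzx.le
      (hasDerivWithinAt_Icc_of_subset hf haz le_rfl) fun t ht =>
        hconc.inv_mul_sub_le hxm (h1 z ⟨haz, le_rfl⟩) hx ht.1 ht.2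
    have e : (x - z)⁻¹ * ((x - z) ^ 2 - (x - x) ^ 2) / 2 = (x - z) / 2 := by
      field_simp; ring
    linarith

theorem half_le_of_convexOn (hcw : c < w)
    (hf : ∀ t ∈ Icc c w, HasDerivWithinAt f (f' t) (Icc c w) t) (hfw : 0 ≤ f w) (hc : f' c = 0)
    (hw : f' w ≤ -1) (hconv : ConvexOn ℝ (Icc c w) f') : (w - c) / 2 ≤ f c := by
  have := sub_le_mul_sq_sub_sq_of_hasDerivWithinAt_le hcw.le hf fun t ht =>
    hconv.le_inv_mul_sub le_rfl hc hw ht.1 ht.2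
  have e : (w - c)⁻¹ * ((c - c) ^ 2 - (c - w) ^ 2) / 2 = -((w - c) / 2) := by
    field_simp [(sub_pos.2 hcw).ne']; ring
  linarith

theorem sub_div_ten_le_of_convexOn (ham : a ≤ m) (hmx : m < x) (hxc : x ≤ c) (hcw : c < w)
    (hf : ∀ t ∈ Icc m c, HasDerivWithinAt f (f' t) (Icc m c) t) (hfm : (m - a) / 2 ≤ f m)
    (hfc : (w - c) / 2 ≤ f c) (hc : f' c = 0) (hw : f' w ≤ -1)
    (hconv : ConvexOn ℝ (Icc m w) f') (hanti : AntitoneOn f' (Icc m c)) :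
    (x - a) / 10 ≤ f x := by
  have hxI : x ∈ Icc m c := ⟨hmx.le, hxc⟩
  have hup : f' x * (x - m) ≤ f x - f m := mul_sub_le_sub_of_le_hasDerivWithinAt hmx.le
    (hasDerivWithinAt_Icc_of_subset hf le_rfl hxc) fun t ht =>
      hanti ⟨ht.1.le, ht.2.le.trans hxc⟩ hxI ht.2.le
  have hx0 : 0 ≤ f' x := hc ▸ hanti hxI ⟨hmx.le.trans hxc, le_rfl⟩ hxc
  -- Either the chord bound on `[m, x]` already gives `(x - m) / 10`, or `c - m < (w - c) / 5`
  -- and `f c ≥ (w - c) / 2` forces `f x ≥ 5 (x - m) / 2`.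
  rcases le_or_gt ((w - c) / 5) (2 * c - m - x) with hfar | hnear
  · have h := mul_sq_sub_sq_le_sub_of_le_hasDerivWithinAt hmx.le
      (hasDerivWithinAt_Icc_of_subset hf le_rfl hxc) fun t ht =>
        hconv.inv_mul_sub_le hc hw ht.1.le (ht.2.trans_le hxc) hcw
    have e : (w - c)⁻¹ * ((c - m) ^ 2 - (c - x) ^ 2) / 2
        = (x - m) * (2 * c - m - x) / (2 * (w - c)) := by
      field_simp; ring
    have : (x - m) / 10 ≤ (x - m) * (2 * c - m - x) / (2 * (w - c)) := by
      rw [le_div_iff₀ (by linarith)]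
      linarith [mul_le_mul_of_nonneg_left hfar (sub_nonneg.2 hmx.le)]
    linarith
  · have hdn : f c - f x ≤ f' x * (c - x) := sub_le_mul_sub_of_hasDerivWithinAt_le hxc
      (hasDerivWithinAt_Icc_of_subset hf hmx.le le_rfl) fun t ht =>
        hanti hxI ⟨hmx.le.trans ht.1.le, ht.2.le⟩ ht.1.le
    have hfm0 : 0 ≤ f m := by linarith
    have hfcx : (w - c) / 2 ≤ f x + f' x * (c - x) := by linarith
    have hkey : (w - c) * (x - m) ≤ 2 * (c - m) * f x := by
      linarith [mul_le_mul_of_nonneg_right hfcx (sub_nonneg.2 hmx.le),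
        mul_le_mul_of_nonneg_left hup (sub_nonneg.2 hxc), mul_nonneg hfm0 (sub_nonneg.2 hxc)]
    have : 5 * (x - m) ≤ 2 * f x := by nlinarith
    linarith [mul_nonneg hx0 (sub_nonneg.2 hmx.le)]

end Estimates

section Reflection

variable {a b : ℝ}

theorem add_sub_mem_Icc {y : ℝ} (hy : y ∈ Icc a b) : a + b - y ∈ Icc a b :=
  ⟨by linarith [hy.2], by linarith [hy.1]⟩

theorem add_sub_mem_Ioo {y : ℝ} (hy : y ∈ Ioo a b) : a + b - y ∈ Ioo a b :=
  ⟨by linarith [hy.2], by linarith [hy.1]⟩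

theorem IsLocalMinOn.of_comp_reflect {g : ℝ → ℝ} {x : ℝ} (hx : x ∈ Ioo a b)
    (hg : IsLocalMinOn (fun y => g (a + b - y)) (Ioo a b) x) :
    IsLocalMinOn g (Ioo a b) (a + b - x) := by
  have := IsLocalMinOn.comp_continuousOn (t := Ioo a b) (s := Ioo a b)
    (g := fun y => a + b - y) (b := a + b - x) (by rwa [sub_sub_cancel])
    (fun y hy => add_sub_mem_Ioo hy) (by fun_prop) (add_sub_mem_Ioo hx)
  simpa [Function.comp_def] using this

theorem IsLocalMaxOn.of_comp_reflect {g : ℝ → ℝ} {x : ℝ} (hx : x ∈ Ioo a b)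
    (hg : IsLocalMaxOn (fun y => g (a + b - y)) (Ioo a b) x) :
    IsLocalMaxOn g (Ioo a b) (a + b - x) := by
  have := IsLocalMaxOn.comp_continuousOn (t := Ioo a b) (s := Ioo a b)
    (g := fun y => a + b - y) (b := a + b - x) (by rwa [sub_sub_cancel])
    (fun y hy => add_sub_mem_Ioo hy) (by fun_prop) (add_sub_mem_Ioo hx)
  simpa [Function.comp_def] using this

theorem hasDerivWithinAt_comp_reflect {φ ψ : ℝ → ℝ}
    (hφ : ∀ x ∈ Icc a b, HasDerivWithinAt φ (ψ x) (Icc a b) x) :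
    ∀ x ∈ Icc a b, HasDerivWithinAt (fun y => φ (a + b - y)) (-ψ (a + b - x)) (Icc a b) x := by
  intro x hx
  have hr : HasDerivWithinAt (fun y => a + b - y) (-1) (Icc a b) x := by
    simpa using (hasDerivWithinAt_id x _).const_sub (a + b)
  simpa [Function.comp_def] using
    (hφ _ (add_sub_mem_Icc hx)).comp x hr fun y hy => add_sub_mem_Icc hy

end Reflection

/-- Conditions (a)–(e), with `f'` and `f''` the one-sided derivatives on `[a, b]`. -/
structure AdmissibleBump (a b c : ℝ) (f f' f'' : ℝ → ℝ) : Prop where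
  lt : a < b
  hasDerivWithinAt : ∀ x ∈ Icc a b, HasDerivWithinAt f (f' x) (Icc a b) x
  hasDerivWithinAt_deriv : ∀ x ∈ Icc a b, HasDerivWithinAt f' (f'' x) (Icc a b) x
  continuousOn_deriv2 : ContinuousOn f'' (Icc a b)
  left_eq_zero : f a = 0
  right_eq_zero : f b = 0
  abs_deriv_left_eq : |f' a| = |f' b|
  one_le_abs_deriv_left : 1 ≤ |f' a|
  crit_mem : c ∈ Ioo a b
  deriv_crit : f' c = 0
  eq_crit : ∀ x ∈ Ioo a b, f' x = 0 → x = c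
  zeros_left : {x | x ∈ Icc a c ∧ f'' x = 0}.Subsingleton
  zeros_right : {x | x ∈ Icc c b ∧ f'' x = 0}.Subsingleton
  neg_of_isLocalMinOn : ∀ x ∈ Ioo a b, IsLocalMinOn f'' (Ioo a b) x → f'' x < 0
  pos_of_isLocalMaxOn : ∀ x ∈ Ioo a b, IsLocalMaxOn f'' (Ioo a b) x → 0 < f'' x

namespace AdmissibleBump

variable {a b c : ℝ} {f f' f'' : ℝ → ℝ}

theorem neg (h : AdmissibleBump a b c f f' f'') :
    AdmissibleBump a b c (fun x => -f x) (fun x => -f' x) (fun x => -f'' x) where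
  lt := h.lt
  hasDerivWithinAt x hx := (h.hasDerivWithinAt x hx).fun_neg
  hasDerivWithinAt_deriv x hx := (h.hasDerivWithinAt_deriv x hx).fun_neg
  continuousOn_deriv2 := h.continuousOn_deriv2.neg
  left_eq_zero := by simp [h.left_eq_zero]
  right_eq_zero := by simp [h.right_eq_zero]
  abs_deriv_left_eq := by simpa using h.abs_deriv_left_eq
  one_le_abs_deriv_left := by simpa using h.one_le_abs_deriv_left
  crit_mem := h.crit_mem
  deriv_crit := by simp [h.deriv_crit]
  eq_crit x hx hx0 := h.eq_crit x hx (neg_eq_zero.1 hx0)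
  zeros_left := by simpa using h.zeros_left
  zeros_right := by simpa using h.zeros_right
  neg_of_isLocalMinOn x hx hmin :=
    neg_neg_of_pos (h.pos_of_isLocalMaxOn x hx (by simpa using hmin.neg))
  pos_of_isLocalMaxOn x hx hmax :=
    neg_pos_of_neg (h.neg_of_isLocalMinOn x hx (by simpa using hmax.neg))

theorem reflect (h : AdmissibleBump a b c f f' f'') :
    AdmissibleBump a b (a + b - c) (fun x => f (a + b - x)) (fun x => -f' (a + b - x))
      (fun x => f'' (a + b - x)) where
  lt := h.lt
  hasDerivWithinAt := hasDerivWithinAt_comp_reflect h.hasDerivWithinAt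
  hasDerivWithinAt_deriv x hx := by
    simpa using (hasDerivWithinAt_comp_reflect h.hasDerivWithinAt_deriv x hx).fun_neg
  continuousOn_deriv2 :=
    h.continuousOn_deriv2.comp (by fun_prop) fun y hy => add_sub_mem_Icc hy
  left_eq_zero := by simp [h.right_eq_zero]
  right_eq_zero := by simp [h.left_eq_zero]
  abs_deriv_left_eq := by simp [h.abs_deriv_left_eq]
  one_le_abs_deriv_left := by simpa [← h.abs_deriv_left_eq] using h.one_le_abs_deriv_left
  crit_mem := add_sub_mem_Ioo h.crit_mem
  deriv_crit := by simp [h.deriv_crit]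
  eq_crit x hx hx0 := by
    have := h.eq_crit (a + b - x) (add_sub_mem_Ioo hx) (neg_eq_zero.1 hx0)
    linarith
  zeros_left := (h.zeros_right.preimage (sub_right_injective (b := a + b))).anti
    fun x hx => ⟨⟨by linarith [hx.1.2], by linarith [hx.1.1]⟩, hx.2⟩
  zeros_right := (h.zeros_left.preimage (sub_right_injective (b := a + b))).anti
    fun x hx => ⟨⟨by linarith [hx.1.2], by linarith [hx.1.1]⟩, hx.2⟩
  neg_of_isLocalMinOn x hx hmin :=
    h.neg_of_isLocalMinOn _ (add_sub_mem_Ioo hx) (hmin.of_comp_reflect hx)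
  pos_of_isLocalMaxOn x hx hmax :=
    h.pos_of_isLocalMaxOn _ (add_sub_mem_Ioo hx) (hmax.of_comp_reflect hx)

theorem continuousOn_deriv (h : AdmissibleBump a b c f f' f'') : ContinuousOn f' (Icc a b) :=
  fun x hx => (h.hasDerivWithinAt_deriv x hx).continuousWithinAt

theorem deriv_ne_zero (h : AdmissibleBump a b c f f' f'') {t : ℝ} (ht : t ∈ Icc a b)
    (htc : t ≠ c) : f' t ≠ 0 := by
  intro h0
  have h1 := h.one_le_abs_deriv_left
  rcases ht.1.eq_or_lt with rfl | hat
  · rw [h0, abs_zero] at h1; linarith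
  rcases ht.2.eq_or_lt with rfl | htb
  · rw [h.abs_deriv_left_eq, h0, abs_zero] at h1; linarith
  exact htc (h.eq_crit t ⟨hat, htb⟩ h0)

theorem deriv_pos_of_lt (h : AdmissibleBump a b c f f' f'') (hpos : 0 < f' a) {t : ℝ}
    (ht : t ∈ Ico a c) : 0 < f' t := by
  obtain ⟨hac, hcb⟩ := h.crit_mem
  have hsign := nonneg_or_nonpos_of_ne_zero
    (h.continuousOn_deriv.mono (Icc_subset_Icc le_rfl hcb.le))
    fun s hs => h.deriv_ne_zero ⟨hs.1.le, hs.2.le.trans hcb.le⟩ hs.2.ne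
  have hnonneg : 0 ≤ f' t :=
    (hsign.resolve_right fun H => (H a ⟨le_rfl, hac.le⟩).not_gt hpos) t ⟨ht.1, ht.2.le⟩
  exact hnonneg.lt_of_ne' (h.deriv_ne_zero ⟨ht.1, ht.2.le.trans hcb.le⟩ ht.2.ne)

theorem deriv_right_neg (h : AdmissibleBump a b c f f' f'') (hpos : 0 < f' a) : f' b < 0 := by
  obtain ⟨hac, hcb⟩ := h.crit_mem
  by_contra! hb
  have hb' : 0 < f' b := hb.lt_of_ne' (h.deriv_ne_zero ⟨h.lt.le, le_rfl⟩ hcb.ne')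
  have hright : ∀ t ∈ Icc c b, 0 ≤ f' t :=
    (nonneg_or_nonpos_of_ne_zero (h.continuousOn_deriv.mono (Icc_subset_Icc hac.le le_rfl))
      fun s hs => h.deriv_ne_zero ⟨hac.le.trans hs.1.le, hs.2.le⟩ hs.1.ne').resolve_right
      fun H => (H b ⟨hcb.le, le_rfl⟩).not_gt hb'
  have hfac : f a < f c := strictMonoOn_Icc_of_hasDerivWithinAt_pos
    (hasDerivWithinAt_Icc_of_subset h.hasDerivWithinAt le_rfl hcb.le)
    (fun t ht => h.deriv_pos_of_lt hpos ⟨ht.1.le, ht.2⟩) ⟨le_rfl, hac.le⟩ ⟨hac.le, le_rfl⟩ hac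
  have hfcb : f c ≤ f b := monotoneOn_Icc_of_hasDerivWithinAt_nonneg
    (hasDerivWithinAt_Icc_of_subset h.hasDerivWithinAt hac.le le_rfl)
    (fun t ht => hright t (Ioo_subset_Icc_self ht)) ⟨le_rfl, hcb.le⟩ ⟨hcb.le, le_rfl⟩ hcb.le
  linarith [h.left_eq_zero, h.right_eq_zero]

theorem exists_one_le_deriv_and_deriv2_nonpos (h : AdmissibleBump a b c f f' f'')
    (hpos : 0 < f' a) : ∃ z ∈ Icc a c, (∀ t ∈ Icc a z, 1 ≤ f' t) ∧ ∀ t ∈ Icc z c, f'' t ≤ 0 := by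
  obtain ⟨hac, hcb⟩ := h.crit_mem
  have hd : 1 ≤ f' a := by simpa [abs_of_pos hpos] using h.one_le_abs_deriv_left
  have hderiv := hasDerivWithinAt_Icc_of_subset h.hasDerivWithinAt_deriv le_rfl hcb.le
  have key : ∀ s ∈ Ico a c, ¬∀ t ∈ Icc s c, 0 ≤ f'' t := fun s hs H => by
    have := monotoneOn_Icc_of_hasDerivWithinAt_nonneg
      (hasDerivWithinAt_Icc_of_subset hderiv hs.1 le_rfl)
      (fun t ht => H t (Ioo_subset_Icc_self ht)) ⟨le_rfl, hs.2.le⟩ ⟨hs.2.le, le_rfl⟩ hs.2.le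
    linarith [h.deriv_pos_of_lt hpos hs, h.deriv_crit]
  have of_nonpos : (∀ t ∈ Icc a c, f'' t ≤ 0) →
      ∃ z ∈ Icc a c, (∀ t ∈ Icc a z, 1 ≤ f' t) ∧ ∀ t ∈ Icc z c, f'' t ≤ 0 := fun H =>
    ⟨a, ⟨le_rfl, hac.le⟩, fun t ht => by rwa [le_antisymm ht.2 ht.1], H⟩
  -- Of the four sign patterns of `f''` on `[a, z]` and `[z, c]`, `key` rules out `(+, +)` and
  -- reduces `(-, +)` to `z = c`.
  obtain ⟨z, hz, hleft | hleft, hright | hright⟩ := exists_sign_split_of_subsingleton_zeros hac.le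
    (h.continuousOn_deriv2.mono (Icc_subset_Icc le_rfl hcb.le)) h.zeros_left
  · exact absurd (fun t ht => (le_total t z).elim (fun htz => hleft t ⟨ht.1, htz⟩)
      fun hzt => hright t ⟨hzt, ht.2⟩) (key a ⟨le_rfl, hac⟩)
  · refine ⟨z, hz, fun t ht => hd.trans ?_, hright⟩
    exact monotoneOn_Icc_of_hasDerivWithinAt_nonneg
      (hasDerivWithinAt_Icc_of_subset hderiv le_rfl hz.2)
      (fun s hs => hleft s (Ioo_subset_Icc_self hs)) ⟨le_rfl, ht.1.trans ht.2⟩ ht ht.1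
  · have hzc : z = c := by_contra fun hne => key z ⟨hz.1, lt_of_le_of_ne hz.2 hne⟩ hright
    exact of_nonpos (hzc ▸ hleft)
  · exact of_nonpos fun t ht => (le_total t z).elim (fun htz => hleft t ⟨ht.1, htz⟩)
      fun hzt => hright t ⟨hzt, ht.2⟩

theorem exists_deriv2_nonpos_and_deriv_le_neg_one (h : AdmissibleBump a b c f f' f'')
    (hpos : 0 < f' a) :
    ∃ w ∈ Icc c b, (∀ t ∈ Icc c w, f'' t ≤ 0) ∧ ∀ t ∈ Icc w b, f' t ≤ -1 := by
  obtain ⟨z, hz, hz1, hzψ⟩ := h.reflect.exists_one_le_deriv_and_deriv2_nonpos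
    (by simpa using neg_pos.2 (h.deriv_right_neg hpos))
  refine ⟨a + b - z, ⟨by linarith [hz.2], by linarith [hz.1]⟩, fun t ht => ?_, fun t ht => ?_⟩
  · simpa using hzψ (a + b - t) ⟨by linarith [ht.2], by linarith [ht.1]⟩
  · have := hz1 (a + b - t) ⟨by linarith [ht.2], by linarith [ht.1]⟩
    simp only [sub_sub_cancel] at this
    linarith

theorem exists_antitoneOn_monotoneOn_deriv2 (h : AdmissibleBump a b c f f' f'') {z w : ℝ}
    (haz : a ≤ z) (hzw : z ≤ w) (hwb : w ≤ b) (hψ : ∀ t ∈ Icc z w, f'' t ≤ 0) :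
    ∃ m ∈ Icc z w, AntitoneOn f'' (Icc z m) ∧ MonotoneOn f'' (Icc m w) := by
  have hcont := h.continuousOn_deriv2.mono (Icc_subset_Icc haz hwb)
  obtain ⟨m, hm, hmin⟩ := isCompact_Icc.exists_isMinOn (nonempty_Icc.2 hzw) hcont
  refine ⟨m, hm, antitoneOn_monotoneOn_of_isMinOn hcont hm hmin fun p hp hmax => ?_⟩
  exact (h.pos_of_isLocalMaxOn p ⟨haz.trans_lt hp.1, hp.2.trans_le hwb⟩ (hmax.on _)).not_ge
    (hψ p (Ioo_subset_Icc_self hp))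

theorem sub_div_ten_le (h : AdmissibleBump a b c f f' f'') (hpos : 0 < f' a) {x : ℝ}
    (hx : x ∈ Ioc a c) : (x - a) / 10 ≤ f x := by
  obtain ⟨hac, hcb⟩ := h.crit_mem
  obtain ⟨z, hz, hz1, hzψ⟩ := h.exists_one_le_deriv_and_deriv2_nonpos hpos
  obtain ⟨w, hw, hwψ, hw1⟩ := h.exists_deriv2_nonpos_and_deriv_le_neg_one hpos
  have hw1' : f' w ≤ -1 := hw1 w ⟨le_rfl, hw.2⟩
  have hcw : c < w := hw.1.lt_of_ne fun hcw => by linarith [h.deriv_crit, hcw ▸ hw1']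
  have hψ : ∀ t ∈ Icc z w, f'' t ≤ 0 := fun t ht =>
    (le_total t c).elim (fun htc => hzψ t ⟨ht.1, htc⟩) fun hct => hwψ t ⟨hct, ht.2⟩
  have hderiv : ∀ {u v : ℝ}, a ≤ u → v ≤ b →
      ∀ t ∈ Icc u v, HasDerivWithinAt f (f' t) (Icc u v) t :=
    hasDerivWithinAt_Icc_of_subset h.hasDerivWithinAt
  have hderiv' : ∀ {u v : ℝ}, z ≤ u → v ≤ w →
      ∀ t ∈ Icc u v, HasDerivWithinAt f' (f'' t) (Icc u v) t := fun hu hv =>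
    hasDerivWithinAt_Icc_of_subset h.hasDerivWithinAt_deriv (hz.1.trans hu) (hv.trans hw.2)
  have hnonneg : ∀ t ∈ Icc a c, 0 ≤ f' t := fun t ht => ht.2.eq_or_lt.elim
    (fun htc => htc ▸ h.deriv_crit.ge) fun htc => (h.deriv_pos_of_lt hpos ⟨ht.1, htc⟩).le
  obtain ⟨m, hm, hanti, hmono⟩ :=
    h.exists_antitoneOn_monotoneOn_deriv2 hz.1 (hz.2.trans hcw.le) hw.2 hψ
  have hconc := concaveOn_Icc_of_hasDerivWithinAt_of_antitoneOn (hderiv' le_rfl hm.2) hanti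
  rcases le_or_gt x m with hxm | hmx
  · have := half_sub_le_of_concaveOn hz.1 hx.1.le hxm (hderiv le_rfl (hx.2.trans hcb.le))
      h.left_eq_zero hz1 (hnonneg x ⟨hx.1.le, hx.2⟩) hconc
    linarith [hx.1]
  have hmc : m ≤ c := hmx.le.trans hx.2
  have hfm := half_sub_le_of_concaveOn hz.1 (hz.1.trans hm.1) le_rfl
    (hderiv le_rfl (hmc.trans hcb.le)) h.left_eq_zero hz1 (hnonneg m ⟨hz.1.trans hm.1, hmc⟩) hconc
  have hfw : 0 ≤ f w := by
    have := sub_le_mul_sub_of_hasDerivWithinAt_le hw.2 (hderiv (hac.le.trans hw.1) le_rfl)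
      fun t ht => hw1 t (Ioo_subset_Icc_self ht)
    linarith [h.right_eq_zero, hw.2]
  have hconv := convexOn_Icc_of_hasDerivWithinAt_of_monotoneOn (hderiv' hm.1 le_rfl) hmono
  have hfc := half_le_of_convexOn hcw (hderiv hac.le hw.2) hfw h.deriv_crit hw1'
    (hconv.subset (Icc_subset_Icc hmc le_rfl) (convex_Icc c w))
  exact sub_div_ten_le_of_convexOn (hz.1.trans hm.1) hmx hx.2 hcw
    (hderiv (hz.1.trans hm.1) hcb.le) hfm hfc h.deriv_crit hw1' hconv
    (antitoneOn_Icc_of_hasDerivWithinAt_nonpos (hderiv' hm.1 hcw.le)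
      fun t ht => hψ t ⟨hm.1.trans ht.1.le, ht.2.le.trans hcw.le⟩)

theorem min_sub_div_twenty_lt (h : AdmissibleBump a b c f f' f'') (hpos : 0 < f' a) {x : ℝ}
    (hx : x ∈ Ioo a b) : min (x - a) (b - x) / 20 < f x := by
  rcases le_or_gt x c with hxc | hcx
  · have := h.sub_div_ten_le hpos ⟨hx.1, hxc⟩
    linarith [min_le_left (x - a) (b - x), hx.1]
  · have := h.reflect.sub_div_ten_le (by simpa using neg_pos.2 (h.deriv_right_neg hpos))
      (x := a + b - x) ⟨by linarith [hx.2], by linarith⟩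
    simp only [sub_sub_cancel] at this
    linarith [min_le_right (x - a) (b - x), hx.2]

end AdmissibleBump

/-- Lemma on `C²` functions on `[a,b]`: under conditions (a)–(e), the function
satisfies `|f(x)| > min{x−a, b−x}/20` on `(a,b)`. Here `f'` and `f''` are the first
and second (one-sided at the endpoints) derivatives of `f` on `[a,b]`. -/
theorem stmt6 (a b c : ℝ) (f f' f'' : ℝ → ℝ) (hab : a < b)
    (hderiv1 : ∀ x ∈ Icc a b, HasDerivWithinAt f (f' x) (Icc a b) x)
    (hderiv2 : ∀ x ∈ Icc a b, HasDerivWithinAt f' (f'' x) (Icc a b) x)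
    (hcont : ContinuousOn f'' (Icc a b))
    (hfa : f a = 0) (hfb : f b = 0)
    (hfab : |f' a| = |f' b|) (hfa1 : 1 ≤ |f' a|)
    (hc : c ∈ Ioo a b) (hc0 : f' c = 0)
    (hcuniq : ∀ x ∈ Ioo a b, f' x = 0 → x = c)
    (hd1 : {x | x ∈ Icc a c ∧ f'' x = 0}.Subsingleton)
    (hd2 : {x | x ∈ Icc c b ∧ f'' x = 0}.Subsingleton)
    (he1 : ∀ x ∈ Ioo a b, IsLocalMinOn f'' (Ioo a b) x → f'' x < 0)
    (he2 : ∀ x ∈ Ioo a b, IsLocalMaxOn f'' (Ioo a b) x → 0 < f'' x) :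
    ∀ x ∈ Ioo a b, min (x - a) (b - x) / 20 < |f x| := by
  have h : AdmissibleBump a b c f f' f'' :=
    ⟨hab, hderiv1, hderiv2, hcont, hfa, hfb, hfab, hfa1, hc, hc0, hcuniq, hd1, hd2, he1, he2⟩
  intro x hx
  rcases (h.deriv_ne_zero ⟨le_rfl, hab.le⟩ hc.1.ne).lt_or_gt with hneg | hpos
  · exact (h.neg.min_sub_div_twenty_lt (neg_pos.2 hneg) hx).trans_le (neg_le_abs _)
  · exact (h.min_sub_div_twenty_lt hpos hx).trans_le (le_abs_self _)
end

section
/- For every K > 0, the set C = {x + iy ∈ ℂ : x > 1 and |Re(e^{x+iy})| ≤ K} = {(x,y) ∈ ℝ² : x > 1 and e^{x}·|cos y| ≤ K} has finite logarithmic area; that is, ∫∫_{C} (x² + y²)^{−1} dx dy < ∞. -/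
/-!
For fixed `y` with `cos y ≠ 0`, a point `(x, y)` of the region has `1 < x ≤ log (K / |cos y|)`,
so its `x`-section has length at most `2 √K |cos y|^(-1/2)` (using `x ≤ 2 e^(x/2)`), while the
density is at most `(1 + y²)⁻¹` there. By Tonelli the logarithmic area is therefore bounded by a
multiple of `∫ |cos y|^(-1/2) (1 + y²)⁻¹ dy`. The factor `|cos y|^(-1/2)` is `π`-periodic and
integrable over a period, since `|cos y| ≥ (2/π) |y - π/2|` on `[0, π]`; splitting `ℝ` into
periods, on the `n`-th one the weight `(1 + y²)⁻¹` is `O(1/n²)`, which is summable.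
-/

open MeasureTheory Set Real Function
open scoped ENNReal

theorem lintegral_le_tsum_setLIntegral_Ioc_add_zsmul {T : ℝ} (hT : 0 < T) (t : ℝ)
    (f : ℝ → ℝ≥0∞) : ∫⁻ y, f y ≤ ∑' n : ℤ, ∫⁻ y in Ioc t (t + T), f (y + n • T) := by
  calc ∫⁻ y, f y = ∫⁻ y in ⋃ n : ℤ, Ioc (t + n • T) (t + (n + 1) • T), f y := by
        rw [iUnion_Ioc_add_zsmul hT, setLIntegral_univ]
    _ ≤ ∑' n : ℤ, ∫⁻ y in Ioc (t + n • T) (t + (n + 1) • T), f y := lintegral_iUnion_le _ _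
    _ = ∑' n : ℤ, ∫⁻ y in Ioc t (t + T), f (y + n • T) := by
        refine tsum_congr fun n => ?_
        rw [← (measurePreserving_add_right volume (n • T)).setLIntegral_comp_preimage_emb
          (measurableEmbedding_addRight _), preimage_add_const_Ioc, add_smul, one_smul]
        congr 2
        rw [add_sub_cancel_right, ← add_assoc, add_right_comm, add_sub_cancel_right]

theorem Function.Periodic.lintegral_mul_lt_top {φ w : ℝ → ℝ≥0∞} {T : ℝ} (hT : 0 < T) (t : ℝ)
    (hφ : Periodic φ T) (hφ_int : ∫⁻ y in Ioc t (t + T), φ y < ∞) {c : ℤ → ℝ≥0∞}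
    (hc : ∑' n, c n ≠ ∞) (hw : ∀ n : ℤ, ∀ y ∈ Ioc t (t + T), w (y + n • T) ≤ c n) :
    ∫⁻ y, φ y * w y < ∞ := by
  calc ∫⁻ y, φ y * w y
      ≤ ∑' n : ℤ, ∫⁻ y in Ioc t (t + T), φ (y + n • T) * w (y + n • T) :=
        lintegral_le_tsum_setLIntegral_Ioc_add_zsmul hT t _
    _ ≤ ∑' n : ℤ, c n * ∫⁻ y in Ioc t (t + T), φ y := by
        refine ENNReal.tsum_le_tsum fun n => ?_
        rw [← lintegral_const_mul' _ _ (ENNReal.ne_top_of_tsum_ne_top hc n)]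
        refine setLIntegral_mono' measurableSet_Ioc fun y hy => ?_
        rw [hφ.zsmul n y, mul_comm]
        exact mul_le_mul_left (hw n y hy) _
    _ = (∑' n, c n) * ∫⁻ y in Ioc t (t + T), φ y := ENNReal.tsum_mul_right
    _ < ∞ := ENNReal.mul_lt_top hc.lt_top hφ_int

theorem inv_one_add_sq_add_le {y a T : ℝ} (hy : |y| ≤ T) :
    (1 + (y + a) ^ 2)⁻¹ ≤ 2 * (1 + T ^ 2) * (1 + a ^ 2)⁻¹ := by
  have hy2 : y ^ 2 ≤ T ^ 2 := sq_le_sq' (abs_le.1 hy).1 (abs_le.1 hy).2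
  rw [← div_eq_mul_inv, inv_eq_one_div, div_le_div_iff₀ (by positivity) (by positivity)]
  nlinarith [sq_nonneg (y + 2 * a), sq_nonneg (T * (y + a)), sq_nonneg (y + a)]

theorem summable_inv_one_add_sq_int_mul {T : ℝ} (hT : T ≠ 0) :
    Summable fun n : ℤ => (1 + (n * T) ^ 2)⁻¹ := by
  refine ((summable_one_div_int_pow.2 one_lt_two).mul_left (T ^ 2)⁻¹).of_norm_bounded_eventually ?_
  filter_upwards [Filter.eventually_cofinite_ne 0] with n hn
  have hnT : 0 < (n * T) ^ 2 := by positivity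
  rw [Real.norm_of_nonneg (by positivity), mul_one_div, div_eq_inv_mul, ← mul_inv, ← mul_pow]
  exact inv_anti₀ hnT (by linarith)

theorem Function.Periodic.lintegral_mul_inv_one_add_sq_lt_top {φ : ℝ → ℝ≥0∞} {T : ℝ}
    (hT : 0 < T) (hφ : Periodic φ T) (hφ_int : ∫⁻ y in Ioc 0 T, φ y < ∞) :
    ∫⁻ y, φ y * ENNReal.ofReal (1 + y ^ 2)⁻¹ < ∞ := by
  have hc : Summable fun n : ℤ => 2 * (1 + T ^ 2) * (1 + (n * T) ^ 2)⁻¹ :=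
    (summable_inv_one_add_sq_int_mul hT.ne').mul_left _
  refine hφ.lintegral_mul_lt_top hT 0 (by simpa using hφ_int)
    (c := fun n => ENNReal.ofReal (2 * (1 + T ^ 2) * (1 + (n * T) ^ 2)⁻¹)) ?_ fun n y hy => ?_
  · rw [← ENNReal.ofReal_tsum_of_nonneg (fun n => by positivity) hc]
    exact ENNReal.ofReal_ne_top
  · rw [zsmul_eq_mul]
    refine ENNReal.ofReal_le_ofReal (inv_one_add_sq_add_le ?_)
    rw [zero_add] at hy
    exact abs_le.2 ⟨by linarith [hy.1], hy.2⟩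

theorem ae_cos_ne_zero : ∀ᵐ y : ℝ, cos y ≠ 0 := by
  have hzeros : {y : ℝ | ¬cos y ≠ 0} ⊆ range fun n : ℤ => (2 * n + 1) * π / 2 := fun y hy =>
    let ⟨n, hn⟩ := cos_eq_zero_iff.1 (not_not.1 hy)
    ⟨n, hn.symm⟩
  exact measure_mono_null hzeros ((countable_range _).measure_zero _)

theorem lintegral_Ioc_abs_cos_rpow_neg_lt_top {s : ℝ} (hs₀ : 0 ≤ s) (hs : s < 1) :
    ∫⁻ y in Ioc 0 π, ENNReal.ofReal (|cos y| ^ (-s)) < ∞ := by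
  have hloc : LocallyIntegrable fun x : ℝ => |x| ^ (-s) :=
    locallyIntegrable_of_norm_le_rpow (μ := volume) (C := 1) (by simp) (by simpa using hs)
      (ae_of_all _ fun x => by simp [abs_of_nonneg (rpow_nonneg (abs_nonneg x) _)])
      (continuous_abs.measurable.pow_const _).aestronglyMeasurable
  have hint : IntegrableOn (fun y => |y - π / 2| ^ (-s)) (Ioc 0 π) := by
    have h := ((hloc.integrableOn_isCompact isCompact_uIcc).intervalIntegrable
      (a := -(π / 2)) (b := π / 2)).comp_sub_right (π / 2)
    rw [neg_add_cancel, add_halves] at h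
    exact (intervalIntegrable_iff_integrableOn_Ioc_of_le pi_pos.le).1 h
  have hbound : ∀ y ∈ Ioc 0 π, y ≠ π / 2 →
      |cos y| ^ (-s) ≤ (2 / π) ^ (-s) * |y - π / 2| ^ (-s) := by
    intro y hy hne
    have hjordan : 2 / π * |π / 2 - y| ≤ |cos y| := by
      rw [← sin_pi_div_two_sub]
      exact mul_abs_le_abs_sin (abs_le.2 ⟨by linarith [hy.2], by linarith [hy.1]⟩)
    rw [abs_sub_comm, ← mul_rpow (by positivity) (abs_nonneg _)]
    exact rpow_le_rpow_of_nonpos (by have := sub_ne_zero.2 hne.symm; positivity) hjordan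
      (neg_nonpos.2 hs₀)
  calc ∫⁻ y in Ioc 0 π, ENNReal.ofReal (|cos y| ^ (-s))
      ≤ ∫⁻ y in Ioc 0 π, ENNReal.ofReal ((2 / π) ^ (-s) * |y - π / 2| ^ (-s)) := by
        refine lintegral_mono_ae ?_
        filter_upwards [ae_restrict_mem measurableSet_Ioc,
          ae_restrict_of_ae (Measure.ae_ne volume (π / 2))] with y hy hne
        exact ENNReal.ofReal_le_ofReal (hbound y hy hne)
    _ < ∞ := (hint.const_mul _).lintegral_lt_top

theorem le_two_mul_sqrt_mul_rpow_of_exp_mul_le {K a x : ℝ} (ha : 0 < a) (h : exp x * a ≤ K) :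
    x ≤ 2 * √K * a ^ (-(1 / 2 : ℝ)) := by
  have hexp : exp (x / 2) ≤ √K * a ^ (-(1 / 2 : ℝ)) := by
    rw [exp_half, rpow_neg ha.le, ← sqrt_eq_rpow, ← div_eq_mul_inv, ← sqrt_div' _ ha.le]
    exact sqrt_le_sqrt ((le_div_iff₀ ha).2 h)
  linarith [add_one_le_exp (x / 2)]

theorem lintegral_indicator_section_le {C : Set (ℝ × ℝ)} {y M : ℝ}
    (hsub : ∀ x, (x, y) ∈ C → x ∈ Ioc 1 M) :
    ∫⁻ x, C.indicator (fun p => ENNReal.ofReal (1 / (p.1 ^ 2 + p.2 ^ 2))) (x, y)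
      ≤ ENNReal.ofReal M * ENNReal.ofReal (1 + y ^ 2)⁻¹ := by
  calc ∫⁻ x, C.indicator (fun p => ENNReal.ofReal (1 / (p.1 ^ 2 + p.2 ^ 2))) (x, y)
      ≤ ∫⁻ x, (Ioc 1 M).indicator (fun _ => ENNReal.ofReal (1 + y ^ 2)⁻¹) x := by
        refine lintegral_mono fun x => ?_
        by_cases hx : (x, y) ∈ C
        · rw [indicator_of_mem hx, indicator_of_mem (hsub x hx), one_div]
          have hx1 : 1 < x := (hsub x hx).1
          exact ENNReal.ofReal_le_ofReal (inv_anti₀ (by positivity) (by nlinarith))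
        · rw [indicator_of_notMem hx]
          exact zero_le
    _ = ENNReal.ofReal (1 + y ^ 2)⁻¹ * ENNReal.ofReal (M - 1) := by
        rw [lintegral_indicator_const measurableSet_Ioc, Real.volume_Ioc]
    _ ≤ ENNReal.ofReal M * ENNReal.ofReal (1 + y ^ 2)⁻¹ := by
        rw [mul_comm]
        gcongr
        linarith

theorem stmt11_general (K : ℝ) :
    ∫⁻ p in {p : ℝ × ℝ | 1 < p.1 ∧ Real.exp p.1 * |Real.cos p.2| ≤ K},
        ENNReal.ofReal (1 / (p.1 ^ 2 + p.2 ^ 2)) ∂volume < ⊤ := by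
  set C : Set (ℝ × ℝ) := {p | 1 < p.1 ∧ exp p.1 * |cos p.2| ≤ K}
  have hC : MeasurableSet C :=
    (measurableSet_lt measurable_const measurable_fst).inter
      (measurableSet_le (f := fun p : ℝ × ℝ => exp p.1 * |cos p.2|) (by fun_prop)
        measurable_const)
  have hsection : ∀ᵐ y : ℝ,
      ∫⁻ x, C.indicator (fun p => ENNReal.ofReal (1 / (p.1 ^ 2 + p.2 ^ 2))) (x, y)
        ≤ ENNReal.ofReal (2 * √K)
          * (ENNReal.ofReal (|cos y| ^ (-(1 / 2 : ℝ))) * ENNReal.ofReal (1 + y ^ 2)⁻¹) := by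
    filter_upwards [ae_cos_ne_zero] with y hy
    rw [← mul_assoc, ← ENNReal.ofReal_mul (by positivity)]
    exact lintegral_indicator_section_le fun x hx =>
      ⟨hx.1, le_two_mul_sqrt_mul_rpow_of_exp_mul_le (abs_pos.2 hy) hx.2⟩
  have hperiodic : Periodic (fun y => ENNReal.ofReal (|cos y| ^ (-(1 / 2 : ℝ)))) π := fun y => by
    simp only [cos_add_pi, abs_neg]
  rw [← lintegral_indicator hC, Measure.volume_eq_prod,
    lintegral_prod_symm' _ (Measurable.indicator (by fun_prop) hC)]
  calc _ ≤ _ := lintegral_mono_ae hsection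
    _ = _ := lintegral_const_mul' _ _ ENNReal.ofReal_ne_top
    _ < ∞ := ENNReal.mul_lt_top ENNReal.ofReal_lt_top
      (hperiodic.lintegral_mul_inv_one_add_sq_lt_top pi_pos
        (lintegral_Ioc_abs_cos_rpow_neg_lt_top (by norm_num) (by norm_num)))

/-- For every `K > 0`, the set `{x + iy : x > 1, e^x·|cos y| ≤ K}` has finite
logarithmic area: `∫∫_C (x² + y²)^{-1} dx dy < ∞`. -/
theorem stmt11 (K : ℝ) (hK : 0 < K) :
    ∫⁻ p in {p : ℝ × ℝ | 1 < p.1 ∧ Real.exp p.1 * |Real.cos p.2| ≤ K},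
        ENNReal.ofReal (1 / (p.1 ^ 2 + p.2 ^ 2)) ∂volume < ⊤ :=
  stmt11_general K
end

section
/- Let f : {z ∈ ℂ : Re z ≥ 0} → ℂ be continuous and bounded, and holomorphic on {z : Re z > 0}. Suppose there exist a₊, a₋ ∈ ℂ such that f(it) → a₊ as t → +∞ and f(it) → a₋ as t → −∞. Then a₊ = a₋, and f(z) → a₊ as |z| → ∞ with Re z ≥ 0. -/
/-! The product `h = (f - a₊) (f - a₋)` is bounded and tends to `0` along the imaginary axis.
Given `ε`, for `s` large the function `g z = z / (z + s) * h z` is at most `ε` on the axis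
(the factor is small where `h` is not), hence on the whole half-plane by Phragmén–Lindelöf;
since `‖z / (z + s)‖ ≥ 1/2` once `‖z‖ ≥ s`, `h → 0` at infinity. If `a₊ ≠ a₋`, then on a
large half-circle `f` runs from near `a₋` to near `a₊`, so at some point it is equidistant from
both, and there `‖h‖ ≥ ‖a₊ - a₋‖² / 4`. -/

open Complex Filter Set Metric Bornology Real Topology

section RightHalfPlane

variable {z : ℂ} {s : ℝ}

theorem norm_le_norm_add_ofReal (hz : 0 ≤ z.re) (hs : 0 ≤ s) : ‖z‖ ≤ ‖z + s‖ := by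
  rw [← sq_le_sq₀ (norm_nonneg _) (norm_nonneg _), Complex.sq_norm, Complex.sq_norm,
    normSq_apply, normSq_apply]
  simp only [add_re, ofReal_re, add_im, ofReal_im, add_zero]
  nlinarith

theorem le_norm_add_ofReal (hz : 0 ≤ z.re) : s ≤ ‖z + s‖ :=
  (by simpa using hz : s ≤ (z + s).re).trans (re_le_norm _)

theorem norm_div_add_ofReal_le_one (hz : 0 ≤ z.re) (hs : 0 ≤ s) : ‖z / (z + s)‖ ≤ 1 := by
  rw [norm_div]
  exact div_le_one_of_le₀ (norm_le_norm_add_ofReal hz hs) (norm_nonneg _)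

theorem norm_div_add_ofReal_le (hz : 0 ≤ z.re) (hs : 0 < s) : ‖z / (z + s)‖ ≤ ‖z‖ / s := by
  rw [norm_div]
  exact div_le_div_of_nonneg_left (norm_nonneg _) hs (le_norm_add_ofReal hz)

theorem half_le_norm_div_add_ofReal (hz : 0 ≤ z.re) (hs : 0 < s) (hsz : s ≤ ‖z‖) :
    1 / 2 ≤ ‖z / (z + s)‖ := by
  have hzs : ‖z + s‖ ≤ ‖z‖ + s := by simpa [abs_of_pos hs] using norm_add_le z (s : ℂ)
  rw [norm_div, le_div_iff₀ (hs.trans_le (le_norm_add_ofReal hz))]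
  linarith

end RightHalfPlane

theorem norm_le_of_forall_norm_le_imAxis {g : ℂ → ℂ} {C : ℝ}
    (hd : DiffContOnCl ℂ g {z | 0 < z.re}) (hb : ∃ M, ∀ z : ℂ, 0 ≤ z.re → ‖g z‖ ≤ M)
    (him : ∀ t : ℝ, ‖g (t * I)‖ ≤ C) {z : ℂ} (hz : 0 ≤ z.re) : ‖g z‖ ≤ C := by
  obtain ⟨M, hM⟩ := hb
  refine PhragmenLindelof.right_half_plane_of_bounded_on_real hd ⟨0, two_pos, 0, ?_⟩
    ⟨M, eventually_map.2 ((eventually_ge_atTop 0).mono fun x hx => hM x (by simpa using hx))⟩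
    him hz
  exact Asymptotics.IsBigO.of_bound M
    (eventually_inf_principal.2 (Eventually.of_forall fun z hz => by simpa using hM z hz.le))

theorem exists_re_nonneg_norm_eq_and_eq_zero {u : ℂ → ℝ} (hu : ContinuousOn u {z | 0 ≤ z.re})
    {R : ℝ} (hR : 0 ≤ R) (hneg : u (-(R * I)) ≤ 0) (hpos : 0 ≤ u (R * I)) :
    ∃ z : ℂ, 0 ≤ z.re ∧ ‖z‖ = R ∧ u z = 0 := by
  have hπ : -π / 2 ≤ π / 2 := by linarith [pi_pos]
  have hre : ∀ θ ∈ Icc (-π / 2) (π / 2), 0 ≤ (circleMap 0 R θ).re := fun θ hθ => by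
    rw [circleMap_zero_re]
    exact mul_nonneg hR (cos_nonneg_of_mem_Icc (by simpa [neg_div] using hθ))
  obtain ⟨θ, hθ, hθ0⟩ := intermediate_value_Icc hπ
    (hu.comp (continuous_circleMap 0 R).continuousOn hre)
    ⟨by simpa [circleMap_neg_pi_div_two] using hneg, by simpa [circleMap_pi_div_two] using hpos⟩
  exact ⟨circleMap 0 R θ, hre θ hθ, by simp [abs_of_nonneg hR], hθ0⟩

theorem tendsto_zero_of_tendsto_zero_on_imAxis {h : ℂ → ℂ}
    (hd : DiffContOnCl ℂ h {z | 0 < z.re}) (hb : ∃ M, ∀ z : ℂ, 0 ≤ z.re → ‖h z‖ ≤ M)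
    (him : Tendsto (fun t : ℝ => h (t * I)) (cobounded ℝ) (𝓝 0)) :
    Tendsto h (cobounded ℂ ⊓ 𝓟 {z | 0 ≤ z.re}) (𝓝 0) := by
  obtain ⟨M, hM⟩ := hb
  have hM0 : 0 ≤ M := (norm_nonneg _).trans (hM 0 le_rfl)
  rw [(hasBasis_cobounded_norm.inf_principal _).tendsto_iff nhds_basis_closedBall]
  intro ε hε
  set δ := ε / 2 with hδε
  have hδ : 0 < δ := half_pos hε
  obtain ⟨T, -, hT⟩ := hasBasis_cobounded_norm.eventually_iff.1
    ((tendsto_zero_iff_norm_tendsto_zero.1 him).eventually (ge_mem_nhds hδ))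
  -- On `|t| < T` the factor `‖t I / (t I + s)‖ ≤ |t| / s` must absorb the bound `M`.
  set s := M * |T| / δ + 1
  have hs : 0 < s := by positivity
  set g : ℂ → ℂ := fun z => z / (z + s) * h z
  have hgd : DiffContOnCl ℂ g {z | 0 < z.re} := by
    refine DiffContOnCl.smul (𝕜' := ℂ) (DifferentiableOn.diffContOnCl ?_) hd
    rw [closure_setOfPred_lt_re]
    exact differentiableOn_id.div (differentiableOn_id.add_const _) fun z hz =>
      norm_pos_iff.1 (hs.trans_le (le_norm_add_ofReal hz))
  have hg_axis : ∀ t : ℝ, ‖g (t * I)‖ ≤ δ := by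
    intro t
    have hre : 0 ≤ ((t : ℂ) * I).re := by simp
    rw [norm_mul, mul_comm]
    rcases le_or_gt T ‖t‖ with ht | ht
    · exact (mul_le_of_le_one_right (norm_nonneg _) (norm_div_add_ofReal_le_one hre hs.le)).trans
        (hT ht)
    · calc ‖h (t * I)‖ * ‖(t * I) / (t * I + s)‖ ≤ M * (‖t‖ / s) := by
            simpa using mul_le_mul (hM _ hre) (norm_div_add_ofReal_le hre hs) (norm_nonneg _) hM0
        _ ≤ δ := by
            rw [mul_div_assoc', div_le_iff₀ hs]
            have : M * ‖t‖ ≤ M * |T| := by gcongr; exact ht.le.trans (le_abs_self T)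
            simp only [s, mul_add, mul_div_cancel₀ _ hδ.ne']
            linarith
  have hg : ∀ z : ℂ, 0 ≤ z.re → ‖g z‖ ≤ δ := fun z hz =>
    norm_le_of_forall_norm_le_imAxis hgd ⟨M, fun w hw => by
      simpa [g, mul_comm] using
        mul_le_mul (hM w hw) (norm_div_add_ofReal_le_one hw hs.le) (norm_nonneg _) hM0⟩
      hg_axis hz
  refine ⟨s, trivial, fun z ⟨hsz, hz⟩ => ?_⟩
  have hfactor := half_le_norm_div_add_ofReal hz hs hsz
  have hgz := hg z hz
  rw [mem_closedBall_zero_iff]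
  simp only [g, norm_mul] at hgz
  nlinarith [norm_nonneg (h z)]

theorem eq_of_tendsto_mul_sub_sub {f : ℂ → ℂ} {a b : ℂ} (hc : ContinuousOn f {z | 0 ≤ z.re})
    (ha : Tendsto (fun t : ℝ => f (t * I)) atTop (𝓝 a))
    (hb : Tendsto (fun t : ℝ => f (t * I)) atBot (𝓝 b))
    (hab : Tendsto (fun z => (f z - a) * (f z - b)) (cobounded ℂ ⊓ 𝓟 {z | 0 ≤ z.re}) (𝓝 0)) :
    a = b := by
  by_contra hne
  set d := ‖a - b‖
  have hd : 0 < d := norm_pos_iff.2 (sub_ne_zero.2 hne)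
  have htri : ∀ w, d ≤ ‖w - a‖ + ‖w - b‖ := fun w => by
    simpa [dist_eq_norm] using dist_triangle_left a b w
  obtain ⟨R₀, -, hR₀⟩ := (hasBasis_cobounded_norm.inf_principal _).eventually_iff.1
    ((tendsto_zero_iff_norm_tendsto_zero.1 hab).eventually
      (gt_mem_nhds (pow_pos (half_pos hd) 2)))
  obtain ⟨R, ⟨hRa, hRb⟩, hR⟩ := (((ha.eventually (ball_mem_nhds a (half_pos hd))).and
    ((hb.comp tendsto_neg_atTop_atBot).eventually (ball_mem_nhds b (half_pos hd)))).and
    (eventually_ge_atTop (max R₀ 0))).exists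
  simp only [dist_eq_norm, Function.comp_apply, ofReal_neg, neg_mul] at hRa hRb
  obtain ⟨z, hz, hzR, hzu⟩ := exists_re_nonneg_norm_eq_and_eq_zero
    (u := fun w => ‖f w - b‖ - ‖f w - a‖)
    ((hc.sub continuousOn_const).norm.sub (hc.sub continuousOn_const).norm)
    ((le_max_right _ _).trans hR) (by linarith [htri (f (-(R * I)))])
    (by linarith [htri (f (R * I))])
  have hlarge : (d / 2) ^ 2 ≤ ‖(f z - a) * (f z - b)‖ := by
    rw [norm_mul]
    nlinarith [htri (f z)]
  exact (hR₀ (x := z) ⟨((le_max_left _ _).trans hR).trans_eq hzR.symm, hz⟩).not_ge hlarge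

/-- Lindelöf's lemma: a bounded continuous function on the closed right half-plane,
holomorphic in the open half-plane, with limits `a₊` and `a₋` along the positive and
negative imaginary axis, satisfies `a₊ = a₋` and tends to this limit as `|z| → ∞`
in the closed half-plane. -/
theorem stmt14 (f : ℂ → ℂ) (aPlus aMinus : ℂ)
    (hc : ContinuousOn f {z : ℂ | 0 ≤ z.re})
    (hb : ∃ C : ℝ, ∀ z : ℂ, 0 ≤ z.re → ‖f z‖ ≤ C)
    (hd : DifferentiableOn ℂ f {z : ℂ | 0 < z.re})
    (hp : Filter.Tendsto (fun t : ℝ => f ((t : ℂ) * Complex.I)) Filter.atTop (nhds aPlus))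
    (hm : Filter.Tendsto (fun t : ℝ => f ((t : ℂ) * Complex.I)) Filter.atBot (nhds aMinus)) :
    aPlus = aMinus ∧ ∀ ε : ℝ, 0 < ε → ∃ R : ℝ, ∀ z : ℂ, 0 ≤ z.re → R ≤ ‖z‖ →
      ‖f z - aPlus‖ < ε := by
  obtain ⟨C, hC⟩ := hb
  have hfa : ∀ a z, 0 ≤ z.re → ‖f z - a‖ ≤ C + ‖a‖ := fun a z hz =>
    norm_sub_le_of_le (hC z hz) le_rfl
  have hh : Tendsto (fun z => (f z - aPlus) * (f z - aMinus)) (cobounded ℂ ⊓ 𝓟 {z | 0 ≤ z.re})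
      (𝓝 0) := by
    refine tendsto_zero_of_tendsto_zero_on_imAxis ?_ ⟨(C + ‖aPlus‖) * (C + ‖aMinus‖), ?_⟩ ?_
    · have hdc : DiffContOnCl ℂ f {z | 0 < z.re} := ⟨hd, by rwa [closure_setOfPred_lt_re]⟩
      exact (hdc.sub_const _).smul (hdc.sub_const _)
    · intro z hz
      rw [norm_mul]
      exact mul_le_mul (hfa _ z hz) (hfa _ z hz) (norm_nonneg _)
        ((norm_nonneg _).trans (hfa aPlus z hz))
    · rw [Metric.cobounded_eq_cocompact, cocompact_eq_atBot_atTop]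
      exact .sup (by simpa using (hm.sub_const aPlus).mul (hm.sub_const aMinus))
        (by simpa using (hp.sub_const aPlus).mul (hp.sub_const aMinus))
  obtain rfl : aPlus = aMinus := eq_of_tendsto_mul_sub_sub hc hp hm hh
  refine ⟨rfl, fun ε hε => ?_⟩
  obtain ⟨R, -, hR⟩ := (hasBasis_cobounded_norm.inf_principal _).eventually_iff.1
    ((tendsto_zero_iff_norm_tendsto_zero.1 hh).eventually (gt_mem_nhds (pow_pos hε 2)))
  exact ⟨R, fun z hz hRz =>
    lt_of_pow_lt_pow_left₀ 2 hε.le (by simpa [sq] using hR (x := z) ⟨hRz, hz⟩)⟩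
end

section
/- Let p and q be real polynomials, neither identically zero, and let R = p/q (so R(t) is defined for all sufficiently large real t). Then the integral ∫_x^∞ R(t)·e^{−t²} dt converges for all sufficiently large x, and (∫_x^∞ R(t)·e^{−t²} dt) / (R(x)·e^{−x²}/(2x)) → 1 as x → +∞. -/
open Filter MeasureTheory Set Asymptotics Real Topology Polynomial

/-!
Put `F t = R t * exp (-t ^ 2)` and `G x = F x / (2 * x)`. A direct computation gives
`G' = -F * (1 + 1 / (2 * x ^ 2) - (R' / R) / (2 * x))`, and the bracket tends to `1` as soon as
the logarithmic derivative `R' / R` tends to `0`, as it does for rational functions. Since the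
tail `∫_x^∞ F` has derivative `-F`, l'Hôpital's rule at `+∞` gives tail / G → 1. Polynomial
growth of `R` makes `F = o(e^{-x/2})`, which gives integrability and `G → 0`.
-/

theorem hasDerivAt_integral_Ioi {f : ℝ → ℝ} {a x : ℝ} (hf : IntegrableOn f (Ioi a))
    (hfc : ContinuousOn f (Ioi a)) (hx : a < x) :
    HasDerivAt (fun y => ∫ t in Ioi y, f t) (-f x) x := by
  have hax : IntervalIntegrable f volume a x :=
    (intervalIntegrable_iff_integrableOn_Ioc_of_le hx.le).2 (hf.mono_set Ioc_subset_Ioi_self)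
  have hderiv := (intervalIntegral.integral_hasDerivAt_right hax
    (hfc.stronglyMeasurableAtFilter isOpen_Ioi x hx)
    (hfc.continuousAt (Ioi_mem_nhds hx))).const_sub (∫ t in Ioi a, f t)
  refine hderiv.congr_of_eventuallyEq ?_
  filter_upwards [Ioi_mem_nhds hx] with y hy
  rw [← intervalIntegral.integral_Ioi_sub_Ioi hf hy.le, sub_sub_cancel]

theorem tendsto_integral_Ioi_div_of_hasDerivAt {f g g' : ℝ → ℝ} {a : ℝ} {l : Filter ℝ}
    (hf : IntegrableOn f (Ioi a)) (hfc : ContinuousOn f (Ioi a))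
    (hgg' : ∀ᶠ x in atTop, HasDerivAt g (g' x) x) (hg' : ∀ᶠ x in atTop, g' x ≠ 0)
    (hg : Tendsto g atTop (𝓝 0)) (hdiv : Tendsto (fun x => -f x / g' x) atTop l) :
    Tendsto (fun x => (∫ t in Ioi x, f t) / g x) atTop l :=
  HasDerivAt.lhopital_zero_atTop
    ((eventually_gt_atTop a).mono fun _ hx => hasDerivAt_integral_Ioi hf hfc hx) hgg' hg'
    (tendsto_integral_Ioi_zero tendsto_id) hg hdiv

section GaussianTail

variable {R : ℝ → ℝ}

theorem isLittleO_mul_exp_neg_sq {s : ℝ} (hR : R =O[atTop] fun x => x ^ s) :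
    (fun x => R x * exp (-x ^ 2)) =o[atTop] fun x => exp (-(1 / 2) * x) := by
  have h := rpow_mul_exp_neg_mul_sq_isLittleO_exp_neg one_pos s
  simp only [neg_one_mul] at h
  exact (hR.mul (isBigO_refl _ _)).trans_isLittleO h

theorem hasDerivAt_mul_exp_neg_sq_div {x : ℝ} (hR : DifferentiableAt ℝ R x) (hRx : R x ≠ 0)
    (hx : x ≠ 0) :
    HasDerivAt (fun y => R y * exp (-y ^ 2) / (2 * y))
      (-(R x * exp (-x ^ 2)) * (1 + 1 / (2 * x ^ 2) - logDeriv R x / (2 * x))) x := by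
  have hexp : HasDerivAt (fun y => exp (-y ^ 2)) (exp (-x ^ 2) * -(2 * x)) x := by
    simpa using ((hasDerivAt_pow 2 x).neg).exp
  refine ((hR.hasDerivAt.mul hexp).div ((hasDerivAt_id x).const_mul 2)
    (mul_ne_zero two_ne_zero hx)).congr_deriv ?_
  simp only [logDeriv_apply, Pi.mul_apply, id]
  field_simp
  ring

theorem tendsto_integral_Ici_mul_exp_neg_sq_div {s : ℝ}
    (hdiff : ∀ᶠ x in atTop, DifferentiableAt ℝ R x) (hne : ∀ᶠ x in atTop, R x ≠ 0)
    (hlog : Tendsto (logDeriv R) atTop (𝓝 0)) (hR : R =O[atTop] fun x => x ^ s) :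
    (∃ x₀ : ℝ, ∀ x, x₀ ≤ x → IntegrableOn (fun t => R t * exp (-t ^ 2)) (Ici x)) ∧
    Tendsto (fun x => (∫ t in Ici x, R t * exp (-t ^ 2)) / (R x * exp (-x ^ 2) / (2 * x)))
      atTop (𝓝 1) := by
  set F := fun t => R t * exp (-t ^ 2)
  set U := fun x : ℝ => 1 + 1 / (2 * x ^ 2) - logDeriv R x / (2 * x)
  obtain ⟨a, ha⟩ := hdiff.exists_forall_of_atTop
  have hFc : ∀ b, a ≤ b → ContinuousOn F (Ici b) := fun b hb x hx =>
    ((ha x (hb.trans hx)).continuousAt.mul (by fun_prop)).continuousWithinAt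
  have hFint : ∀ b, a ≤ b → IntegrableOn F (Ioi b) := fun b hb =>
    integrable_of_isBigO_exp_neg one_half_pos (hFc b hb) (isLittleO_mul_exp_neg_sq hR).isBigO
  refine ⟨⟨a, fun x hx => (integrableOn_Ici_iff_integrableOn_Ioi).2 (hFint x hx)⟩, ?_⟩
  have h2x : Tendsto (fun x : ℝ => 2 * x) atTop atTop := tendsto_id.const_mul_atTop two_pos
  have hU : Tendsto U atTop (𝓝 1) := by
    have hsq : Tendsto (fun x : ℝ => 1 / (2 * x ^ 2)) atTop (𝓝 0) :=
      tendsto_const_nhds.div_atTop ((tendsto_pow_atTop two_ne_zero).const_mul_atTop two_pos)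
    have h := ((tendsto_const_nhds (x := (1 : ℝ))).add hsq).sub (hlog.div_atTop h2x)
    rwa [add_zero, sub_zero] at h
  have hF0 : ∀ᶠ x in atTop, F x ≠ 0 := hne.mono fun x hx => mul_ne_zero hx (exp_ne_zero _)
  simp_rw [integral_Ici_eq_integral_Ioi]
  refine tendsto_integral_Ioi_div_of_hasDerivAt (g' := fun x => -F x * U x) (hFint a le_rfl)
    ((hFc a le_rfl).mono Ioi_subset_Ici_self) ?_ ?_ ?_ ?_
  · filter_upwards [hdiff, hne, eventually_ne_atTop 0] with x hRd hRx hx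
    exact hasDerivAt_mul_exp_neg_sq_div hRd hRx hx
  · filter_upwards [hF0, hU.eventually_ne one_ne_zero] with x hFx hUx
    exact mul_ne_zero (neg_ne_zero.2 hFx) hUx
  · exact ((isLittleO_mul_exp_neg_sq hR).trans_tendsto
      (tendsto_exp_atBot.comp (tendsto_id.const_mul_atTop_of_neg (by norm_num)))).div_atTop h2x
  · have hUinv : Tendsto (fun x => (U x)⁻¹) atTop (𝓝 1) := by
      simpa using hU.inv₀ one_ne_zero
    refine hUinv.congr' ?_
    filter_upwards [hF0] with x hFx
    rw [neg_mul, neg_div_neg_eq, div_mul_cancel_left₀ hFx]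

end GaussianTail

theorem Polynomial.tendsto_logDeriv_eval_atTop {p : ℝ[X]} (hp : p ≠ 0) :
    Tendsto (logDeriv fun x => eval x p) atTop (𝓝 0) := by
  refine (div_tendsto_atTop_zero_of_degree_lt _ _ (degree_derivative_lt hp)).congr fun x => ?_
  rw [logDeriv_apply, Polynomial.deriv]

theorem Polynomial.tendsto_logDeriv_eval_div_eval_atTop {p q : ℝ[X]} (hp : p ≠ 0)
    (hq : q ≠ 0) : Tendsto (logDeriv fun x => eval x p / eval x q) atTop (𝓝 0) := by
  have h := (tendsto_logDeriv_eval_atTop hp).sub (tendsto_logDeriv_eval_atTop hq)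
  rw [sub_zero] at h
  refine h.congr' ?_
  filter_upwards [eventually_atTop_not_isRoot p hp, eventually_atTop_not_isRoot q hq]
    with x hpx hqx
  exact (logDeriv_div (f := fun x => eval x p) (g := fun x => eval x q) x hpx hqx
    p.differentiableAt q.differentiableAt).symm

theorem Polynomial.isBigO_eval_div_eval_rpow (p q : ℝ[X]) :
    (fun x => eval x p / eval x q) =O[atTop]
      fun x => x ^ ((p.natDegree - q.natDegree : ℤ) : ℝ) := by
  simpa only [rpow_intCast] using (isEquivalent_atTop_div p q).isBigO.trans
    ((isBigO_refl _ _).const_mul_left _)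

/-- For a real rational function `R = p/q` (with `p, q` non-zero real polynomials),
the integral `∫_x^∞ R(t)·e^{−t²} dt` converges for all large `x` and is asymptotic to
`R(x)·e^{−x²}/(2x)` as `x → +∞`. -/
theorem stmt16 (p q : Polynomial ℝ) (hp : p ≠ 0) (hq : q ≠ 0) :
    (∃ x₀ : ℝ, ∀ x : ℝ, x₀ ≤ x →
      MeasureTheory.IntegrableOn
        (fun t : ℝ => Polynomial.eval t p / Polynomial.eval t q * Real.exp (-t ^ 2))
        (Set.Ici x)) ∧
    Filter.Tendsto
      (fun x : ℝ =>
        (∫ t in Set.Ici x, Polynomial.eval t p / Polynomial.eval t q * Real.exp (-t ^ 2)) /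
          (Polynomial.eval x p / Polynomial.eval x q * Real.exp (-x ^ 2) / (2 * x)))
      Filter.atTop (nhds 1) := by
  have hp0 := eventually_atTop_not_isRoot p hp
  have hq0 := eventually_atTop_not_isRoot q hq
  refine tendsto_integral_Ici_mul_exp_neg_sq_div ?_ ?_
    (tendsto_logDeriv_eval_div_eval_atTop hp hq) (isBigO_eval_div_eval_rpow p q)
  · filter_upwards [hq0] with x hqx
    exact p.differentiableAt.div q.differentiableAt hqx
  · filter_upwards [hp0, hq0] with x hpx hqx
    exact div_ne_zero hpx hqx
end
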